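/- Transport invariance of the weight ζ (Lemma 'rt lemma 1'): Let R₁, R₂, ε > 0. At every point (η,φ,ψ) with 0 ≤ εη < min(R₁,R₂), φ ∈ (−π/2, π/2) and ψ ∈ ℝ at which ζ(η,φ,ψ) > 0, the function ζ is differentiable in (η,φ) and satisfies sin φ · ∂ζ/∂η + F(η,ψ) cos φ · ∂ζ/∂φ = 0. -/

import Mathlib

noncomputable section

open Real Set MeasureTheory

namespace MilneStmt

/-- The geometric force `F(η,ψ)`. -/
def force (R₁ R₂ ε η ψ : ℝ) : ℝ :=
  -ε * (Real.sin ψ ^ 2 / (R₁ - ε * η) + Real.cos ψ ^ 2 / (R₂ - ε * η))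

/-- The potential `V(η,ψ)`, with `V(0,ψ) = 0` and `∂V/∂η = -F(η,ψ)`. -/
def potential (R₁ R₂ ε η ψ : ℝ) : ℝ :=
  Real.sin ψ ^ 2 * Real.log (R₁ / (R₁ - ε * η))
    + Real.cos ψ ^ 2 * Real.log (R₂ / (R₂ - ε * η))

/-- The weight `ζ(η,φ,ψ) = (1 - e^{-2V(η,ψ)} cos²φ)^{1/2}`. -/
def zetaWeight (R₁ R₂ ε : ℝ) (p : ℝ × ℝ × ℝ) : ℝ :=
  Real.sqrt (1 - Real.exp (-2 * potential R₁ R₂ ε p.1 p.2.2) * Real.cos p.2.1 ^ 2)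

/-! With `K = e^{-2V}` and `u = 1 - K cos²φ`, the relation `∂V/∂η = -F` gives
`∂u/∂η = -2FK cos²φ` and `∂u/∂φ = 2K cos φ sin φ`, so `sin φ ∂u/∂η + F cos φ ∂u/∂φ = 0`
identically. Since `ζ = √u` and `u > 0` wherever `ζ > 0`, both partials of `ζ` are those of `u`
divided by the same factor `2ζ`, and the transport identity passes to `ζ`. -/

theorem hasDerivAt_log_div_sub {R ε η : ℝ} (hR : R ≠ 0) (hη : R - ε * η ≠ 0) :
    HasDerivAt (fun t => Real.log (R / (R - ε * t))) (ε / (R - ε * η)) η := by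
  have hden : HasDerivAt (fun t => R - ε * t) (-ε) η := by
    simpa using (hasDerivAt_id η).const_mul ε |>.const_sub R
  refine (((hasDerivAt_const η R).fun_div hden hη).log (div_ne_zero hR hη)).congr_deriv ?_
  field_simp
  ring

theorem hasDerivAt_potential {R₁ R₂ ε η : ℝ} (ψ : ℝ) (hR₁ : R₁ ≠ 0) (hR₂ : R₂ ≠ 0)
    (hη₁ : R₁ - ε * η ≠ 0) (hη₂ : R₂ - ε * η ≠ 0) :
    HasDerivAt (fun t => potential R₁ R₂ ε t ψ) (-force R₁ R₂ ε η ψ) η := by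
  refine (((hasDerivAt_log_div_sub hR₁ hη₁).const_mul (Real.sin ψ ^ 2)).add
    ((hasDerivAt_log_div_sub hR₂ hη₂).const_mul (Real.cos ψ ^ 2))).congr_deriv ?_
  simp only [force]
  ring

theorem hasDerivAt_zetaWeight_fst {R₁ R₂ ε η φ ψ F : ℝ}
    (hV : HasDerivAt (fun t => potential R₁ R₂ ε t ψ) (-F) η)
    (hζ : 0 < zetaWeight R₁ R₂ ε (η, φ, ψ)) :
    HasDerivAt (fun t => zetaWeight R₁ R₂ ε (t, φ, ψ))
      (-F * Real.exp (-2 * potential R₁ R₂ ε η ψ) * Real.cos φ ^ 2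
        / zetaWeight R₁ R₂ ε (η, φ, ψ)) η := by
  have hu := ((hV.const_mul (-2)).exp.mul_const (Real.cos φ ^ 2)).const_sub 1
  refine (hu.sqrt (Real.sqrt_pos.mp hζ).ne').congr_deriv ?_
  change _ / (2 * zetaWeight R₁ R₂ ε (η, φ, ψ)) = _
  field_simp

theorem hasDerivAt_zetaWeight_snd {R₁ R₂ ε η φ ψ : ℝ}
    (hζ : 0 < zetaWeight R₁ R₂ ε (η, φ, ψ)) :
    HasDerivAt (fun t => zetaWeight R₁ R₂ ε (η, t, ψ))
      (Real.exp (-2 * potential R₁ R₂ ε η ψ) * Real.cos φ * Real.sin φ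
        / zetaWeight R₁ R₂ ε (η, φ, ψ)) φ := by
  have hu := (((Real.hasDerivAt_cos φ).fun_pow 2).const_mul
    (Real.exp (-2 * potential R₁ R₂ ε η ψ))).const_sub 1
  refine (hu.sqrt (Real.sqrt_pos.mp hζ).ne').congr_deriv ?_
  change _ / (2 * zetaWeight R₁ R₂ ε (η, φ, ψ)) = _
  field_simp
  ring

theorem zeta_transport_invariance_general (R₁ R₂ ε : ℝ) (hR₁ : 0 < R₁) (hR₂ : 0 < R₂)
    (η φ ψ : ℝ) (hη₁ : ε * η < min R₁ R₂)
    (hζ : 0 < zetaWeight R₁ R₂ ε (η, φ, ψ)) :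
    DifferentiableAt ℝ (fun t => zetaWeight R₁ R₂ ε (t, φ, ψ)) η ∧
    DifferentiableAt ℝ (fun t => zetaWeight R₁ R₂ ε (η, t, ψ)) φ ∧
    Real.sin φ * deriv (fun t => zetaWeight R₁ R₂ ε (t, φ, ψ)) η
      + force R₁ R₂ ε η ψ * Real.cos φ * deriv (fun t => zetaWeight R₁ R₂ ε (η, t, ψ)) φ
      = 0 := by
  have hV := hasDerivAt_potential ψ hR₁.ne' hR₂.ne'
    (sub_pos.2 (hη₁.trans_le (min_le_left _ _))).ne'
    (sub_pos.2 (hη₁.trans_le (min_le_right _ _))).ne'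
  have hdη := hasDerivAt_zetaWeight_fst hV hζ
  have hdφ := hasDerivAt_zetaWeight_snd hζ
  refine ⟨hdη.differentiableAt, hdφ.differentiableAt, ?_⟩
  rw [hdη.deriv, hdφ.deriv]
  ring

/-- Lemma "rt lemma 1": transport invariance of the weight `ζ`. -/
theorem zeta_transport_invariance (R₁ R₂ ε : ℝ) (hR₁ : 0 < R₁) (hR₂ : 0 < R₂)
    (hε : 0 < ε) (η φ ψ : ℝ) (hη₀ : 0 ≤ ε * η) (hη₁ : ε * η < min R₁ R₂)
    (hφ : φ ∈ Ioo (-(π / 2)) (π / 2))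
    (hζ : 0 < zetaWeight R₁ R₂ ε (η, φ, ψ)) :
    DifferentiableAt ℝ (fun t => zetaWeight R₁ R₂ ε (t, φ, ψ)) η ∧
    DifferentiableAt ℝ (fun t => zetaWeight R₁ R₂ ε (η, t, ψ)) φ ∧
    Real.sin φ * deriv (fun t => zetaWeight R₁ R₂ ε (t, φ, ψ)) η
      + force R₁ R₂ ε η ψ * Real.cos φ * deriv (fun t => zetaWeight R₁ R₂ ε (η, t, ψ)) φ
      = 0 :=
  zeta_transport_invariance_general R₁ R₂ ε hR₁ hR₂ η φ ψ hη₁ hζ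

end MilneStmt
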